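/- Specializing the first Fu–Lascoux identity at x = 0: for n, m ≥ 1, ∑_{i=1}^n [n choose i]_q (-1)^{i-1} q^{binom(i,2)} q^{mi}/(1-q^i)^m = ∑_{1 ≤ i_1 ≤ i_2 ≤ ⋯ ≤ i_m ≤ n} ∏_{j=1}^m q^{i_j}/(1-q^{i_j}). -/

import Mathlib

open Finset

noncomputable def qPoch {K : Type*} [Field K] (q a : K) (n : ℕ) : K :=
  ∏ k ∈ Finset.range n, (1 - a * q ^ k)

noncomputable def qBinom {K : Type*} [Field K] (q : K) (n i : ℕ) : K :=
  qPoch q q n / (qPoch q q i * qPoch q q (n - i))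

noncomputable def wsum {K : Type*} [Field K] (f : ℕ → K) : ℕ → ℕ → ℕ → K
  | 0, _, _ => 1
  | m + 1, lo, n => ∑ j ∈ Finset.Icc lo n, f j * wsum f m j n

noncomputable def Tsum {K : Type*} [Field K] (q : K) (m n : ℕ) : K :=
  ∑ i ∈ Icc 1 n, qBinom q n i * (-1 : K) ^ (i - 1) *
    (∏ j ∈ range i, ((0 : K) + q ^ j)) * q ^ (m * i) / (1 - q ^ i) ^ m

section FL
variable {K : Type*} [Field K] {q : K}

lemma one_sub_ne' (hq : ∀ k : ℕ, 0 < k → q ^ k ≠ 1) (k : ℕ) (hk : 0 < k) :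
    (1 : K) - q ^ k ≠ 0 :=
  sub_ne_zero_of_ne (fun h => hq k hk h.symm)

lemma qPoch_succ (n : ℕ) : qPoch q q (n + 1) = qPoch q q n * (1 - q ^ (n + 1)) := by
  simp [qPoch, prod_range_succ, pow_succ, mul_comm]

variable (hq : ∀ k : ℕ, 0 < k → q ^ k ≠ 1)
include hq

lemma qPoch_ne (n : ℕ) : qPoch q q n ≠ 0 := by
  rw [qPoch]
  refine prod_ne_zero_iff.2 fun k _ => ?_
  have : (1 : K) - q * q ^ k = 1 - q ^ (k + 1) := by ring
  rw [this]; exact one_sub_ne' hq (k + 1) k.succ_pos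

lemma qBinom_self (n : ℕ) : qBinom q n n = 1 := by
  have h := qPoch_ne hq (q := q) n
  simp [qBinom, Nat.sub_self, qPoch]
  simpa [qPoch] using h

lemma qBinom_zero (n : ℕ) : qBinom q n 0 = 1 := by
  have h := qPoch_ne hq (q := q) n
  simp [qBinom, qPoch]
  simpa [qPoch] using h

lemma qBinom_key (i e : ℕ) :
    qBinom q (i + e + 1) i * (1 - q ^ (e + 1)) = qBinom q (i + e) i * (1 - q ^ (i + e + 1)) := by
  have h1 : i + e + 1 - i = e + 1 := by omega
  have h2 : i + e - i = e := by omega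
  rw [qBinom, qBinom, h1, h2, qPoch_succ (q := q) (i + e), qPoch_succ (q := q) e]
  have hi := qPoch_ne hq (q := q) i
  have he := qPoch_ne hq (q := q) e
  have hn := qPoch_ne hq (q := q) (i + e)
  have h3 := one_sub_ne' hq (e + 1) e.succ_pos
  have h4 := one_sub_ne' hq (i + e + 1) (Nat.succ_pos _)
  field_simp

lemma qBinom_pascal (j e : ℕ) :
    qBinom q (j + e + 1 + 1) (j + 1)
      = qBinom q (j + e + 1) (j + 1) + q ^ (e + 1) * qBinom q (j + e + 1) j := by
  have h1 : j + e + 1 + 1 - (j + 1) = e + 1 := by omega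
  have h2 : j + e + 1 - (j + 1) = e := by omega
  have h3 : j + e + 1 - j = e + 1 := by omega
  rw [qBinom, qBinom, qBinom, h1, h2, h3]
  have e1 : qPoch q q (j + e + 1 + 1)
      = qPoch q q (j + e) * (1 - q ^ (j + e + 1)) * (1 - q ^ (j + e + 1 + 1)) := by
    rw [qPoch_succ, qPoch_succ]
  have e2 : qPoch q q (j + e + 1) = qPoch q q (j + e) * (1 - q ^ (j + e + 1)) := qPoch_succ _
  have e3 : qPoch q q (j + 1) = qPoch q q j * (1 - q ^ (j + 1)) := qPoch_succ _
  have e4 : qPoch q q (e + 1) = qPoch q q e * (1 - q ^ (e + 1)) := qPoch_succ _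
  rw [e1, e2, e3, e4]
  have hj := qPoch_ne hq (q := q) j
  have he := qPoch_ne hq (q := q) e
  have hn := qPoch_ne hq (q := q) (j + e)
  have h4 := one_sub_ne' hq (j + 1) (Nat.succ_pos _)
  have h5 := one_sub_ne' hq (e + 1) (Nat.succ_pos _)
  have h6 := one_sub_ne' hq (j + e + 1) (Nat.succ_pos _)
  field_simp
  ring

/-- the per-term identity used for the recurrence in `n`. -/
lemma term_step (s p : K) (i e m : ℕ) (hi : 1 ≤ i) :
    qBinom q (i + e + 1) i * s * p * q ^ ((m + 1) * i) / (1 - q ^ i) ^ (m + 1)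
      - q ^ (i + e + 1) / (1 - q ^ (i + e + 1)) *
        (qBinom q (i + e + 1) i * s * p * q ^ (m * i) / (1 - q ^ i) ^ m)
      = qBinom q (i + e) i * s * p * q ^ ((m + 1) * i) / (1 - q ^ i) ^ (m + 1) := by
  have hu := one_sub_ne' hq i hi
  have hw := one_sub_ne' hq (i + e + 1) (Nat.succ_pos _)
  have hB : qBinom q (i + e) i = qBinom q (i + e + 1) i * (1 - q ^ (e + 1)) / (1 - q ^ (i + e + 1)) := by
    rw [eq_div_iff hw]
    exact (qBinom_key hq i e).symm
  rw [hB, show (m + 1) * i = m * i + i by ring, pow_add, pow_succ]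
  have hum := pow_ne_zero m hu
  field_simp
  ring

end FL

section Sums
variable {K : Type*} [Field K] {q : K}

lemma Icc_one_sum (g : ℕ → K) (n : ℕ) : ∑ i ∈ Icc 1 n, g i = ∑ i ∈ range n, g (i + 1) := by
  rw [← Finset.Ico_add_one_right_eq_Icc, Finset.sum_Ico_eq_sum_range]
  exact sum_congr rfl fun i _ => by rw [Nat.add_comm]

variable (hq : ∀ k : ℕ, 0 < k → q ^ k ≠ 1)
include hq

/-- the q-binomial theorem at `x = -1`. -/
lemma Sfull : ∀ n : ℕ, 1 ≤ n →
    ∑ i ∈ range (n + 1), qBinom q n i * (-1 : K) ^ i * (∏ j ∈ range i, ((0 : K) + q ^ j)) = 0 := by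
  intro n hn
  induction n, hn using Nat.le_induction with
  | base =>
    simp [sum_range_succ, qBinom_self hq, qBinom_zero hq]
  | succ n hn ih =>
    have ih1 : ∑ i ∈ range n,
        qBinom q n (i + 1) * (-1 : K) ^ (i + 1) * (∏ j ∈ range (i + 1), ((0 : K) + q ^ j))
        = -1 := by
      rw [sum_range_succ'] at ih
      simp only [qBinom_zero hq, pow_zero, range_zero, prod_empty, mul_one, one_mul] at ih
      linear_combination ih
    have ih2 : ∑ i ∈ range n,
        qBinom q n i * (-1 : K) ^ i * (∏ j ∈ range i, ((0 : K) + q ^ j))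
        = -((-1 : K) ^ n * ∏ j ∈ range n, ((0 : K) + q ^ j)) := by
      rw [sum_range_succ, qBinom_self hq, one_mul] at ih
      linear_combination ih
    rw [sum_range_succ, sum_range_succ']
    have hcongr : ∀ i ∈ range n,
        qBinom q (n + 1) (i + 1) * (-1 : K) ^ (i + 1) * (∏ j ∈ range (i + 1), ((0 : K) + q ^ j))
        = qBinom q n (i + 1) * (-1 : K) ^ (i + 1) * (∏ j ∈ range (i + 1), ((0 : K) + q ^ j))
          - q ^ n * (qBinom q n i * (-1 : K) ^ i * (∏ j ∈ range i, ((0 : K) + q ^ j))) := by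
      intro i hi
      obtain ⟨e, rfl⟩ : ∃ e, n = i + e + 1 := ⟨n - i - 1, by have := mem_range.1 hi; omega⟩
      rw [qBinom_pascal hq i e, prod_range_succ, pow_succ]
      ring
    rw [sum_congr rfl hcongr, sum_sub_distrib, ih1, ← mul_sum, ih2,
      qBinom_zero hq, qBinom_self hq, prod_range_succ]
    simp only [pow_zero, range_zero, prod_empty, mul_one, one_mul]
    rw [pow_succ]
    ring

lemma Tbase (n : ℕ) (hn : 1 ≤ n) : Tsum q 0 n = 1 := by
  have hS := Sfull hq n hn
  rw [sum_range_succ'] at hS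
  simp only [qBinom_zero hq, pow_zero, range_zero, prod_empty, mul_one, one_mul] at hS
  rw [Tsum, Icc_one_sum]
  simp only [Nat.zero_mul, pow_zero, mul_one, div_one, Nat.add_sub_cancel]
  rw [show (∑ i ∈ range n, qBinom q n (i + 1) * (-1 : K) ^ i * (∏ j ∈ range (i + 1), ((0 : K) + q ^ j)))
      = ∑ i ∈ range n, -(qBinom q n (i + 1) * (-1 : K) ^ (i + 1) * (∏ j ∈ range (i + 1), ((0 : K) + q ^ j)))
    from sum_congr rfl fun i _ => by rw [pow_succ]; ring, sum_neg_distrib]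
  linear_combination -hS

lemma Trec (m n : ℕ) :
    Tsum q (m + 1) (n + 1)
      = Tsum q (m + 1) n + q ^ (n + 1) / (1 - q ^ (n + 1)) * Tsum q m (n + 1) := by
  have expand : Tsum q (m + 1) (n + 1) - q ^ (n + 1) / (1 - q ^ (n + 1)) * Tsum q m (n + 1)
      = Tsum q (m + 1) n := by
    rw [Tsum, Tsum, Tsum, mul_sum, ← sum_sub_distrib,
      sum_Icc_succ_top (by omega : 1 ≤ n + 1)]
    have htop : qBinom q (n + 1) (n + 1) * (-1 : K) ^ (n + 1 - 1) *
          (∏ j ∈ range (n + 1), ((0 : K) + q ^ j)) * q ^ ((m + 1) * (n + 1)) / (1 - q ^ (n + 1)) ^ (m + 1)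
        - q ^ (n + 1) / (1 - q ^ (n + 1)) *
          (qBinom q (n + 1) (n + 1) * (-1 : K) ^ (n + 1 - 1) *
            (∏ j ∈ range (n + 1), ((0 : K) + q ^ j)) * q ^ (m * (n + 1)) / (1 - q ^ (n + 1)) ^ m)
        = 0 := by
      have hw := one_sub_ne' hq (n + 1) (Nat.succ_pos _)
      have hwm := pow_ne_zero m hw
      rw [show (m + 1) * (n + 1) = m * (n + 1) + (n + 1) by ring, pow_add, pow_succ]
      field_simp
      ring
    rw [htop, add_zero]
    refine sum_congr rfl fun i hi => ?_
    rw [mem_Icc] at hi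
    obtain ⟨e, rfl⟩ : ∃ e, n = i + e := ⟨n - i, by omega⟩
    exact term_step hq ((-1 : K) ^ (i - 1)) (∏ j ∈ range i, ((0 : K) + q ^ j)) i e m hi.1
  linear_combination expand
end Sums

section W
variable {K : Type*} [Field K]

lemma wsum_empty (f : ℕ → K) (m lo n : ℕ) (h : n < lo) : wsum f (m + 1) lo n = 0 := by
  rw [wsum, Icc_eq_empty (by omega), sum_empty]

lemma wrec (f : ℕ → K) (m : ℕ) : ∀ lo n : ℕ, lo ≤ n + 1 →
    wsum f (m + 1) lo (n + 1) = wsum f (m + 1) lo n + f (n + 1) * wsum f m lo (n + 1) := by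
  induction m with
  | zero =>
    intro lo n h
    simp only [wsum, mul_one]
    exact sum_Icc_succ_top h f
  | succ m ih =>
    intro lo n h
    rw [show wsum f (m + 1 + 1) lo (n + 1)
        = ∑ j ∈ Icc lo (n + 1), f j * wsum f (m + 1) j (n + 1) from rfl]
    have hc : ∀ j ∈ Icc lo (n + 1), f j * wsum f (m + 1) j (n + 1)
        = f j * wsum f (m + 1) j n + f (n + 1) * (f j * wsum f m j (n + 1)) := by
      intro j hj
      rw [ih j n (mem_Icc.1 hj).2]
      ring
    rw [sum_congr rfl hc, sum_add_distrib, ← mul_sum,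
      sum_Icc_succ_top h (fun j => f j * wsum f (m + 1) j n),
      wsum_empty f m (n + 1) n (lt_add_one n)]
    rw [show wsum f (m + 1 + 1) lo n = ∑ j ∈ Icc lo n, f j * wsum f (m + 1) j n from rfl,
      show wsum f (m + 1) lo (n + 1) = ∑ j ∈ Icc lo (n + 1), f j * wsum f m j (n + 1) from rfl]
    ring
end W

section Main
variable {K : Type*} [Field K] {q : K} (hq : ∀ k : ℕ, 0 < k → q ^ k ≠ 1)
include hq

omit hq in
lemma Tsum_zero (m : ℕ) : Tsum q m 0 = 0 := by
  rw [Tsum, Icc_eq_empty (by omega), sum_empty]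

lemma Tmain (m : ℕ) : ∀ n : ℕ, Tsum q (m + 1) n = wsum (fun j => q ^ j / (1 - q ^ j)) (m + 1) 1 n := by
  induction m with
  | zero =>
    intro n
    induction n with
    | zero => rw [Tsum_zero, wsum_empty _ _ _ _ Nat.zero_lt_one]
    | succ n ihn =>
      rw [Trec hq, ihn, Tbase hq (n + 1) (Nat.succ_pos _),
        wrec _ 0 1 n (by omega)]
      simp [wsum]
  | succ m ihm =>
    intro n
    induction n with
    | zero => rw [Tsum_zero, wsum_empty _ _ _ _ Nat.zero_lt_one]
    | succ n ihn =>
      rw [Trec hq, ihn, ihm (n + 1), wrec _ (m + 1) 1 n (by omega)]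
end Main

/-- The first Fu–Lascoux identity specialized at `x = 0`
(the product `(x+1)(x+q)⋯(x+q^{i-1})` at `x = 0` equals `q^{i(i-1)/2}`,
recovering Dilcher's identity). -/
theorem fu_lascoux_one_at_zero {K : Type*} [Field K] (q : K)
    (hq : ∀ k : ℕ, 0 < k → q ^ k ≠ 1) (n m : ℕ) (hn : 1 ≤ n) (hm : 1 ≤ m) :
    ∑ i ∈ Icc 1 n, qBinom q n i * (-1 : K) ^ (i - 1) *
        (∏ j ∈ range i, ((0 : K) + q ^ j)) * q ^ (m * i) / (1 - q ^ i) ^ m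
      = wsum (fun j => q ^ j / (1 - q ^ j)) m 1 n := by
  obtain ⟨m', rfl⟩ : ∃ m', m = m' + 1 := ⟨m - 1, by omega⟩
  exact Tmain hq m' n
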